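/- arXiv:2409.01606 — 4 statements merged into one kernel-verified Lean document; each statement's English description precedes it below -/
import Mathlib

section
/- Quantitative law of large numbers in L¹ for interaction functionals: Let (V, ‖·‖_V) be a Banach space, let (Z_i)_{i≥1} be independent identically distributed V-valued random variables with E‖Z₁‖_V² < ∞, and let h : V × V → ℝ be measurable with at most linear growth, i.e. |h(v, ṽ)| ≤ K_h(1 + ‖v‖_V + ‖ṽ‖_V) for all v, ṽ ∈ V and some constant K_h > 0. Then there exists a constant c̃ > 0 depending only on K_h (and not on V, h, the law of Z₁, or N) such that for every N ≥ 1, E | (1/N) Σ_{m=1}^N h(Z₁, Z_m) − ∫_V h(Z₁, y) μ(dy) | ≤ c̃ (1 + (E‖Z₁‖_V²)^{1/2}) N^{−1/2}, where μ denotes the law of Z₁. -/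
/-!
Write `g(z, w) = h(z, w) - ∫ h(z, y) μ(dy)`, so that the quantity to bound is the `L¹` norm of the
average of `G_m = g(Z₁, Z_m)`. For `m ≠ l` one of the two indices, say `l`, differs from `1` and
from the other, so `Z_l` is independent of `(Z₁, Z_m)` and `E[G_m G_l] = 0` because `g(z, ·)` has
`μ`-mean zero. The `G_m` are therefore orthogonal in `L²`, and the linear growth of `h` bounds
`E[G_m²]` by a multiple of `K_h² (1 + E‖Z₁‖²)`; Cauchy–Schwarz turns the resulting `L²` bound of
order `N^{-1/2}` into the `L¹` bound.
-/

open MeasureTheory ProbabilityTheory Finset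

section SquareIntegrable

variable {Ω : Type*} [MeasurableSpace Ω] {P : Measure Ω}

lemma sq_integral_abs_le_integral_sq [IsProbabilityMeasure P] {f : Ω → ℝ} (hf : MemLp f 2 P) :
    (∫ ω, |f ω| ∂P) ^ 2 ≤ ∫ ω, f ω ^ 2 ∂P := by
  have hvar := variance_nonneg |f| P
  rw [variance_eq_sub hf.abs] at hvar
  simpa [sq_abs] using hvar

lemma integral_abs_le_sqrt_integral_sq [IsProbabilityMeasure P] {f : Ω → ℝ} (hf : MemLp f 2 P) :
    ∫ ω, |f ω| ∂P ≤ √(∫ ω, f ω ^ 2 ∂P) :=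
  Real.le_sqrt_of_sq_le (sq_integral_abs_le_integral_sq hf)

lemma memLp_two_of_sq_le {f g : Ω → ℝ} (hf : AEStronglyMeasurable f P) (hg : Integrable g P)
    (hfg : ∀ ω, f ω ^ 2 ≤ g ω) : MemLp f 2 P :=
  (memLp_two_iff_integrable_sq hf).2 <| hg.mono' (hf.pow 2) <| ae_of_all _ fun ω => by
    simpa [abs_of_nonneg (sq_nonneg (f ω))] using hfg ω

lemma integral_sq_sum_of_orthogonal {ι : Type*} {s : Finset ι} {G : ι → Ω → ℝ}
    (hG : ∀ i ∈ s, MemLp (G i) 2 P)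
    (horth : ∀ i ∈ s, ∀ j ∈ s, i ≠ j → ∫ ω, G i ω * G j ω ∂P = 0) :
    ∫ ω, (∑ i ∈ s, G i ω) ^ 2 ∂P = ∑ i ∈ s, ∫ ω, G i ω ^ 2 ∂P := by
  have hint : ∀ i ∈ s, ∀ j ∈ s, Integrable (fun ω => G i ω * G j ω) P :=
    fun i hi j hj => (hG i hi).integrable_mul (hG j hj)
  simp_rw [sq, sum_mul_sum]
  rw [integral_finsetSum _ fun i hi => integrable_finsetSum _ fun j hj => hint i hi j hj]
  refine sum_congr rfl fun i hi => ?_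
  rw [integral_finsetSum _ fun j hj => hint i hi j hj]
  exact sum_eq_single_of_mem i hi fun j hj hji => horth i hi j hj hji.symm

lemma integral_abs_average_le_of_orthogonal [IsProbabilityMeasure P] {ι : Type*} {s : Finset ι}
    {G : ι → Ω → ℝ} {C : ℝ} (hG : ∀ i ∈ s, MemLp (G i) 2 P)
    (horth : ∀ i ∈ s, ∀ j ∈ s, i ≠ j → ∫ ω, G i ω * G j ω ∂P = 0)
    (hC : ∀ i ∈ s, ∫ ω, G i ω ^ 2 ∂P ≤ C) :
    ∫ ω, |(1 / (#s : ℝ)) * ∑ i ∈ s, G i ω| ∂P ≤ √(C / #s) := by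
  have hsum : MemLp (fun ω => ∑ i ∈ s, G i ω) 2 P := by
    simpa [← Finset.sum_apply] using memLp_finsetSum' s hG
  calc ∫ ω, |(1 / (#s : ℝ)) * ∑ i ∈ s, G i ω| ∂P
      ≤ √(∫ ω, ((1 / (#s : ℝ)) * ∑ i ∈ s, G i ω) ^ 2 ∂P) :=
        integral_abs_le_sqrt_integral_sq (hsum.const_mul _)
    _ = √((1 / (#s : ℝ)) ^ 2 * ∑ i ∈ s, ∫ ω, G i ω ^ 2 ∂P) := by
        simp_rw [mul_pow]
        rw [integral_const_mul, integral_sq_sum_of_orthogonal hG horth]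
    _ ≤ √((1 / (#s : ℝ)) ^ 2 * (#s * C)) := by
        gcongr
        simpa using sum_le_card_nsmul s _ C hC
    _ = √(C / #s) := by
        rcases eq_or_ne (#s : ℝ) 0 with hs | hs
        · simp [hs]
        · congr 1
          field_simp

end SquareIntegrable

lemma IndepFun.integral_comp_eq_zero {Ω α β : Type*} [MeasurableSpace Ω] [MeasurableSpace α]
    [MeasurableSpace β] {P : Measure Ω} [IsFiniteMeasure P] {U : Ω → α} {W : Ω → β}
    (hUW : IndepFun U W P) (hU : Measurable U) (hW : Measurable W) {F : α → β → ℝ}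
    (hF : Measurable (Function.uncurry F)) (hint : Integrable (fun ω => F (U ω) (W ω)) P)
    (hzero : ∀ a, ∫ b, F a b ∂(P.map W) = 0) :
    ∫ ω, F (U ω) (W ω) ∂P = 0 := by
  have hmap : P.map (fun ω => (U ω, W ω)) = (P.map U).prod (P.map W) :=
    (indepFun_iff_map_prod_eq_prod_map_map hU.aemeasurable hW.aemeasurable).1 hUW
  have hUW' : AEMeasurable (fun ω => (U ω, W ω)) P := (hU.prodMk hW).aemeasurable
  have hint' : Integrable (Function.uncurry F) ((P.map U).prod (P.map W)) := by
    rw [← hmap]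
    exact (integrable_map_measure hF.aestronglyMeasurable hUW').2 hint
  calc ∫ ω, F (U ω) (W ω) ∂P = ∫ p, Function.uncurry F p ∂((P.map U).prod (P.map W)) := by
        rw [← hmap, integral_map hUW' hF.aestronglyMeasurable]
        rfl
    _ = 0 := by
        rw [integral_prod _ hint']
        simp [hzero]

noncomputable def centerSnd {α β : Type*} [MeasurableSpace β] (μ : Measure β) (h : α × β → ℝ)
    (z : α) (w : β) : ℝ :=
  h (z, w) - ∫ y, h (z, y) ∂μ

section CenterSnd

variable {α β : Type*} [MeasurableSpace β] {μ : Measure β} {h : α × β → ℝ}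

lemma measurable_centerSnd [MeasurableSpace α] [SFinite μ] (hh : Measurable h) :
    Measurable (Function.uncurry (centerSnd μ h)) :=
  hh.sub (hh.stronglyMeasurable.integral_prod_right'.measurable.comp measurable_fst)

lemma integral_centerSnd [IsProbabilityMeasure μ] {z : α} (hz : Integrable (fun y => h (z, y)) μ) :
    ∫ w, centerSnd μ h z w ∂μ = 0 := by
  simp [centerSnd, integral_sub hz (integrable_const _)]

end CenterSnd

lemma integral_centerSnd_mul_centerSnd_eq_zero {Ω α ι : Type*} [MeasurableSpace Ω]
    [MeasurableSpace α] {P : Measure Ω} [IsFiniteMeasure P] {μ : Measure α} [IsProbabilityMeasure μ]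
    {h : α × α → ℝ} (hh : Measurable h) (hsec : ∀ z, Integrable (fun y => h (z, y)) μ)
    {Z : ι → Ω → α} (hZ : ∀ i, Measurable (Z i)) (hind : iIndepFun Z P) {i j k : ι} (hik : i ≠ k)
    (hjk : j ≠ k) (hk : P.map (Z k) = μ)
    (hint : Integrable (fun ω => centerSnd μ h (Z i ω) (Z j ω) * centerSnd μ h (Z i ω) (Z k ω)) P) :
    ∫ ω, centerSnd μ h (Z i ω) (Z j ω) * centerSnd μ h (Z i ω) (Z k ω) ∂P = 0 := by
  have hg := measurable_centerSnd (μ := μ) hh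
  refine IndepFun.integral_comp_eq_zero (hind.indepFun_prodMk hZ i j k hik hjk)
    ((hZ i).prodMk (hZ j)) (hZ k) (F := fun p w => centerSnd μ h p.1 p.2 * centerSnd μ h p.1 w)
    ?_ hint fun p => ?_
  · exact (hg.comp (measurable_fst.fst.prodMk measurable_fst.snd)).mul
      (hg.comp (measurable_fst.fst.prodMk measurable_snd))
  · rw [hk, integral_const_mul, integral_centerSnd (hsec p.1), mul_zero]

section LinearGrowth

variable {E F : Type*} [NormedAddCommGroup E] [NormedAddCommGroup F] [MeasurableSpace F]
  {μ : Measure F} {h : E × F → ℝ} {K : ℝ}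

lemma integrable_linear_bound [IsFiniteMeasure μ] (hμ : Integrable (‖·‖) μ) (c : ℝ) :
    Integrable (fun w => K * (c + ‖w‖)) μ :=
  ((integrable_const c).add hμ).const_mul K

lemma integrable_section_of_linear_growth [MeasurableSpace E] [IsFiniteMeasure μ]
    (hh : Measurable h) (hgrowth : ∀ z w, |h (z, w)| ≤ K * (1 + ‖z‖ + ‖w‖))
    (hμ : Integrable (‖·‖) μ) (z : E) :
    Integrable (fun w => h (z, w)) μ :=
  (integrable_linear_bound hμ (1 + ‖z‖)).mono'
    (hh.comp measurable_prodMk_left).aestronglyMeasurable (ae_of_all _ (hgrowth z))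

lemma abs_centerSnd_le [IsProbabilityMeasure μ]
    (hgrowth : ∀ z w, |h (z, w)| ≤ K * (1 + ‖z‖ + ‖w‖)) (hμ : Integrable (‖·‖) μ) (z : E) (w : F) :
    |centerSnd μ h z w| ≤ K * (2 + 2 * ‖z‖ + ‖w‖ + ∫ y, ‖y‖ ∂μ) := by
  have hmean : |∫ y, h (z, y) ∂μ| ≤ K * (1 + ‖z‖ + ∫ y, ‖y‖ ∂μ) := by
    calc |∫ y, h (z, y) ∂μ| ≤ ∫ y, K * (1 + ‖z‖ + ‖y‖) ∂μ := by
          rw [← Real.norm_eq_abs]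
          exact norm_integral_le_of_norm_le (integrable_linear_bound hμ (1 + ‖z‖))
            (ae_of_all _ (hgrowth z))
      _ = K * (1 + ‖z‖ + ∫ y, ‖y‖ ∂μ) := by
          rw [integral_const_mul, integral_add (integrable_const _) hμ]
          simp
  calc |centerSnd μ h z w| ≤ |h (z, w)| + |∫ y, h (z, y) ∂μ| := abs_sub _ _
    _ ≤ K * (1 + ‖z‖ + ‖w‖) + K * (1 + ‖z‖ + ∫ y, ‖y‖ ∂μ) := add_le_add (hgrowth z w) hmean
    _ = K * (2 + 2 * ‖z‖ + ‖w‖ + ∫ y, ‖y‖ ∂μ) := by ring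

lemma sq_centerSnd_le [IsProbabilityMeasure μ]
    (hgrowth : ∀ z w, |h (z, w)| ≤ K * (1 + ‖z‖ + ‖w‖)) (hμ : Integrable (‖·‖) μ) (z : E) (w : F) :
    centerSnd μ h z w ^ 2 ≤ 4 * K ^ 2 * (4 + 4 * ‖z‖ ^ 2 + ‖w‖ ^ 2 + (∫ y, ‖y‖ ∂μ) ^ 2) := by
  set s := ∫ y, ‖y‖ ∂μ
  have hs : 0 ≤ s := integral_nonneg fun y => norm_nonneg y
  have hz := norm_nonneg z
  have hw := norm_nonneg w
  calc centerSnd μ h z w ^ 2 = |centerSnd μ h z w| ^ 2 := (sq_abs _).symm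
    _ ≤ (K * (2 + 2 * ‖z‖ + ‖w‖ + s)) ^ 2 :=
        pow_le_pow_left₀ (abs_nonneg _) (abs_centerSnd_le hgrowth hμ z w) 2
    _ ≤ K ^ 2 * (4 * (2 ^ 2 + (2 * ‖z‖) ^ 2 + ‖w‖ ^ 2 + s ^ 2)) := by
        rw [mul_pow]
        gcongr
        nlinarith [sq_nonneg (2 - 2 * ‖z‖), sq_nonneg (2 - ‖w‖), sq_nonneg (2 - s),
          sq_nonneg (2 * ‖z‖ - ‖w‖), sq_nonneg (2 * ‖z‖ - s), sq_nonneg (‖w‖ - s)]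
    _ = 4 * K ^ 2 * (4 + 4 * ‖z‖ ^ 2 + ‖w‖ ^ 2 + s ^ 2) := by ring

end LinearGrowth

section Sampling

variable {Ω E : Type*} [MeasurableSpace Ω] {P : Measure Ω} [NormedAddCommGroup E]
  [MeasurableSpace E] {μ : Measure E} [IsProbabilityMeasure μ] {h : E × E → ℝ} {K : ℝ}

lemma memLp_centerSnd_comp [IsFiniteMeasure P] (hh : Measurable h)
    (hgrowth : ∀ z w, |h (z, w)| ≤ K * (1 + ‖z‖ + ‖w‖)) (hμ : Integrable (‖·‖) μ)
    {U W : Ω → E} (hU : Measurable U) (hW : Measurable W)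
    (hU2 : Integrable (fun ω => ‖U ω‖ ^ 2) P) (hW2 : Integrable (fun ω => ‖W ω‖ ^ 2) P) :
    MemLp (fun ω => centerSnd μ h (U ω) (W ω)) 2 P :=
  memLp_two_of_sq_le ((measurable_centerSnd hh).comp (hU.prodMk hW)).aestronglyMeasurable
    (by fun_prop) fun ω => sq_centerSnd_le hgrowth hμ (U ω) (W ω)

lemma integral_sq_centerSnd_comp_le [IsProbabilityMeasure P] (hh : Measurable h)
    (hgrowth : ∀ z w, |h (z, w)| ≤ K * (1 + ‖z‖ + ‖w‖)) (hμ : Integrable (‖·‖) μ)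
    {U W : Ω → E} (hU : Measurable U) (hW : Measurable W)
    (hU2 : Integrable (fun ω => ‖U ω‖ ^ 2) P) (hW2 : Integrable (fun ω => ‖W ω‖ ^ 2) P) :
    ∫ ω, centerSnd μ h (U ω) (W ω) ^ 2 ∂P ≤
      4 * K ^ 2 * (4 + 4 * ∫ ω, ‖U ω‖ ^ 2 ∂P + ∫ ω, ‖W ω‖ ^ 2 ∂P + (∫ y, ‖y‖ ∂μ) ^ 2) := by
  calc ∫ ω, centerSnd μ h (U ω) (W ω) ^ 2 ∂P
      ≤ ∫ ω, 4 * K ^ 2 * (4 + 4 * ‖U ω‖ ^ 2 + ‖W ω‖ ^ 2 + (∫ y, ‖y‖ ∂μ) ^ 2) ∂P :=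
        integral_mono (memLp_centerSnd_comp hh hgrowth hμ hU hW hU2 hW2).integrable_sq
          (by fun_prop) fun ω => sq_centerSnd_le hgrowth hμ (U ω) (W ω)
    _ = _ := by
        rw [integral_const_mul, integral_add (by fun_prop) (integrable_const _),
          integral_add (by fun_prop) hW2, integral_add (integrable_const 4) (hU2.const_mul 4),
          integral_const_mul]
        simp

variable [OpensMeasurableSpace E]

theorem integral_abs_average_centerSnd_le [IsProbabilityMeasure P] (hh : Measurable h)
    (hgrowth : ∀ z w, |h (z, w)| ≤ K * (1 + ‖z‖ + ‖w‖)) (hμ2 : Integrable (fun y => ‖y‖ ^ 2) μ)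
    {ι : Type*} {Z : ι → Ω → E} (hZ : ∀ i, Measurable (Z i)) (hind : iIndepFun Z P)
    (hlaw : ∀ i, P.map (Z i) = μ) (i : ι) (s : Finset ι) :
    ∫ ω, |(1 / (#s : ℝ)) * ∑ m ∈ s, centerSnd μ h (Z i ω) (Z m ω)| ∂P ≤
      √(24 * K ^ 2 * (1 + ∫ y, ‖y‖ ^ 2 ∂μ) / #s) := by
  have hZ2 : ∀ m, Integrable (fun ω => ‖Z m ω‖ ^ 2) P := fun m => by
    rw [← hlaw m] at hμ2
    exact hμ2.comp_measurable (hZ m)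
  have hZ2M : ∀ m, ∫ ω, ‖Z m ω‖ ^ 2 ∂P = ∫ y, ‖y‖ ^ 2 ∂μ := fun m => by
    rw [← hlaw m, integral_map (hZ m).aemeasurable (by fun_prop)]
  set M := ∫ y, ‖y‖ ^ 2 ∂μ
  have hnorm : MemLp (‖·‖) 2 μ :=
    (memLp_two_iff_integrable_sq measurable_norm.aestronglyMeasurable).2 hμ2
  have hμ : Integrable (‖·‖) μ := hnorm.integrable one_le_two
  have hmean : (∫ y, ‖y‖ ∂μ) ^ 2 ≤ M := by
    simpa using sq_integral_abs_le_integral_sq hnorm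
  have hmem : ∀ m, MemLp (fun ω => centerSnd μ h (Z i ω) (Z m ω)) 2 P := fun m =>
    memLp_centerSnd_comp hh hgrowth hμ (hZ i) (hZ m) (hZ2 i) (hZ2 m)
  have hsec := integrable_section_of_linear_growth hh hgrowth hμ
  refine integral_abs_average_le_of_orthogonal (fun m _ => hmem m) ?_ fun m _ => ?_
  · intro m _ l _ hml
    have hint (j k : ι) := (hmem j).integrable_mul (hmem k)
    by_cases hl : l = i
    · subst hl
      simp_rw [mul_comm (centerSnd μ h (Z l _) (Z m _))]
      exact integral_centerSnd_mul_centerSnd_eq_zero hh hsec hZ hind (Ne.symm hml) (Ne.symm hml)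
        (hlaw m) (hint l m)
    · exact integral_centerSnd_mul_centerSnd_eq_zero hh hsec hZ hind (Ne.symm hl) hml (hlaw l)
        (hint m l)
  · have hM : 0 ≤ M := integral_nonneg fun y => sq_nonneg ‖y‖
    calc ∫ ω, centerSnd μ h (Z i ω) (Z m ω) ^ 2 ∂P ≤ 4 * K ^ 2 * (4 + 4 * M + M + M) := by
          grw [integral_sq_centerSnd_comp_le hh hgrowth hμ (hZ i) (hZ m) (hZ2 i) (hZ2 m), hZ2M,
            hZ2M, hmean]
      _ ≤ 24 * K ^ 2 * (1 + M) := by nlinarith [sq_nonneg K]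

end Sampling

lemma sqrt_div_le_mul_rpow_neg_half {K M n : ℝ} (hK : 0 ≤ K) (hM : 0 ≤ M) (hn : 0 ≤ n) :
    √(24 * K ^ 2 * (1 + M) / n) ≤ 5 * K * (1 + √M) * n ^ (-(1 / 2) : ℝ) := by
  rw [Real.sqrt_div' _ hn, Real.rpow_neg hn, ← Real.sqrt_eq_rpow, ← div_eq_mul_inv]
  gcongr
  exact Real.sqrt_le_iff.2 ⟨by positivity, by nlinarith [Real.sq_sqrt hM, Real.sqrt_nonneg M]⟩

/-- Quantitative law of large numbers in `L¹` for interaction functionals: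
for any `K_h > 0` there is a constant `c > 0`, depending only on `K_h`, such that
for any Banach space `V`, any i.i.d. sequence `(Z_i)_{i ≥ 1}` of `V`-valued random
variables with common law `μ` and finite second moment, any measurable
`h : V × V → ℝ` of at most linear growth with constant `K_h`, and any `N ≥ 1`,
`E |(1/N) ∑_{m=1}^N h(Z₁, Z_m) − ∫_V h(Z₁, y) μ(dy)|
  ≤ c (1 + (E‖Z₁‖²)^{1/2}) N^{-1/2}`. -/
theorem quantitative_LLN_interaction
    (K_h : ℝ) (hKh : 0 < K_h) :
    ∃ c > (0:ℝ),
      ∀ (V : Type) [NormedAddCommGroup V] [NormedSpace ℝ V] [CompleteSpace V]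
        [MeasurableSpace V] [BorelSpace V]
        (Ω : Type) [MeasurableSpace Ω] (P : Measure Ω) [IsProbabilityMeasure P]
        (Z : ℕ → Ω → V) (μ : Measure V) [IsProbabilityMeasure μ],
        (∀ i, Measurable (Z i)) →
        iIndepFun Z P →
        (∀ i, Measure.map (Z i) P = μ) →
        Integrable (fun ω => ‖Z 1 ω‖ ^ 2) P →
        ∀ (h : V × V → ℝ), Measurable h →
        (∀ v w : V, |h (v, w)| ≤ K_h * (1 + ‖v‖ + ‖w‖)) →
        ∀ (N : ℕ), 1 ≤ N →
          (∫ ω, |(1 / (N : ℝ)) * ∑ m ∈ Finset.Icc 1 N, h (Z 1 ω, Z m ω)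
              - ∫ y, h (Z 1 ω, y) ∂μ| ∂P)
            ≤ c * (1 + Real.sqrt (∫ ω, ‖Z 1 ω‖ ^ 2 ∂P)) * (N : ℝ) ^ (-(1/2) : ℝ) := by
  refine ⟨5 * K_h, by positivity, ?_⟩
  intro V _ _ _ _ _ Ω _ P _ Z μ _ hZ hind hlaw hZ2 h hh hgrowth N hN
  have hcard : (#(Icc 1 N) : ℝ) = N := by simp
  have hμ2 : Integrable (fun y => ‖y‖ ^ 2) μ := by
    rw [← hlaw 1]
    exact (integrable_map_measure (by fun_prop) (hZ 1).aemeasurable).2 hZ2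
  have hM : ∫ ω, ‖Z 1 ω‖ ^ 2 ∂P = ∫ y, ‖y‖ ^ 2 ∂μ := by
    rw [← hlaw 1, integral_map (hZ 1).aemeasurable (by fun_prop)]
  have hcenter : ∀ ω, (1 / (N : ℝ)) * ∑ m ∈ Icc 1 N, h (Z 1 ω, Z m ω) - ∫ y, h (Z 1 ω, y) ∂μ
      = (1 / (#(Icc 1 N) : ℝ)) * ∑ m ∈ Icc 1 N, centerSnd μ h (Z 1 ω) (Z m ω) := fun ω => by
    have hN' : (N : ℝ) ≠ 0 := by positivity
    simp only [centerSnd, sum_sub_distrib, sum_const, nsmul_eq_mul, hcard]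
    field_simp
  simp_rw [hcenter, hM]
  rw [← hcard]
  exact (integral_abs_average_centerSnd_le hh hgrowth hμ2 hZ hind hlaw 1 _).trans
    (sqrt_div_le_mul_rpow_neg_half hKh.le (integral_nonneg fun y => sq_nonneg ‖y‖) (by positivity))
end

section
/- ODE satisfied by the coupling distance function f: Let β > 0, R > 0, K₁ ≥ 0, K₂ > 0, let γ be the piecewise rate function (γ(r) = K₁r for r ≤ R, γ(r) = (−((K₁+K₂)/R)(r−R)+K₁)r for R ≤ r ≤ 2R, γ(r) = −K₂ r for r > 2R), let δ := ∫₀^∞ s e^{(1/(2β))∫₀ˢ γ(v)dv} ds, and define f(r) = ∫₀ʳ e^{−(1/(2β))∫₀ᵘ γ(v)dv} ( ∫_u^∞ s e^{(1/(2β))∫₀ˢ γ(v)dv} ds ) du for r ≥ 0. Then f is twice differentiable on (0,∞), f′(0) = δ, and for every r ≥ 0 one has f″(r) = −(1/(2β)) γ(r) f′(r) − r; equivalently, f′(r) γ(r) + 2β f″(r) = −2β r. -/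
/-!
Write `Γ(u) = ∫₀ᵘ γ` and `c = 1/(2β)`. Then `f' = e^{-cΓ} H` with `H(u) = ∫_u^∞ s e^{cΓ(s)} ds`,
which is finite because `γ(s) = -K₂ s` beyond `2R`, so the integrand is Gaussian there.
Since `H' = -s e^{cΓ}`, the product rule gives `f'' = -cγ f' - e^{-cΓ} r e^{cΓ} = -cγ f' - r`,
and `f'(0) = H(0) = δ` because `Γ(0) = 0`.
-/

open MeasureTheory Real

/-- The piecewise partially dissipative rate function `γ`. -/
noncomputable def rateGamma (R K₁ K₂ : ℝ) (r : ℝ) : ℝ :=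
  if r ≤ R then K₁ * r
  else if r ≤ 2 * R then (-((K₁ + K₂) / R) * (r - R) + K₁) * r
  else -K₂ * r

/-- The constant `δ = ∫₀^∞ s e^{(1/(2β)) ∫₀ˢ γ(v) dv} ds`. -/
noncomputable def deltaConst (β R K₁ K₂ : ℝ) : ℝ :=
  ∫ s in Set.Ioi (0:ℝ),
    s * Real.exp ((1 / (2 * β)) * ∫ v in (0:ℝ)..s, rateGamma R K₁ K₂ v)

/-- The coupling distance function
`f(r) = ∫₀ʳ e^{−(1/(2β))∫₀ᵘ γ} (∫_u^∞ s e^{(1/(2β))∫₀ˢ γ} ds) du`. -/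
noncomputable def couplingF (β R K₁ K₂ : ℝ) (r : ℝ) : ℝ :=
  ∫ u in (0:ℝ)..r,
    Real.exp (-(1 / (2 * β)) * ∫ v in (0:ℝ)..u, rateGamma R K₁ K₂ v) *
      ∫ s in Set.Ioi u,
        s * Real.exp ((1 / (2 * β)) * ∫ v in (0:ℝ)..s, rateGamma R K₁ K₂ v)

open Set

theorem hasDerivAt_setIntegral_Ioi {E : Type*} [NormedAddCommGroup E] [NormedSpace ℝ E]
    [CompleteSpace E] {f : ℝ → E} {b : ℝ} (hf : Continuous f) (hb : IntegrableOn f (Ioi b))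
    (u : ℝ) : HasDerivAt (fun u => ∫ x in Ioi u, f x) (-f u) u := by
  have hsplit : (fun u => ∫ x in Ioi u, f x) = fun u => (∫ x in u..b, f x) + ∫ x in Ioi b, f x :=
    funext fun u =>
      (intervalIntegral.integral_interval_add_Ioi' (hf.intervalIntegrable _ _) hb).symm
  rw [hsplit]
  exact (intervalIntegral.integral_hasDerivAt_left (hf.intervalIntegrable _ _)
    (hf.stronglyMeasurableAtFilter _ _) hf.continuousAt).add_const _

section CouplingODE

variable {Γ γ : ℝ → ℝ} {b c : ℝ}

theorem integrableOn_Ioi_mul_exp_of_hasDerivAt_neg_mul {K : ℝ} (hc : 0 < c) (hK : 0 < K)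
    (hΓ : ∀ s ≥ b, HasDerivAt Γ (-K * s) s) :
    IntegrableOn (fun s => s * exp (c * Γ s)) (Ioi b) := by
  have hΓ_eq : ∀ s ≥ b, Γ s = Γ b - K / 2 * (s ^ 2 - b ^ 2) := by
    intro s hs
    have hFTC := intervalIntegral.integral_eq_sub_of_hasDerivAt (f' := fun x => -K * x)
      (fun x hx => hΓ x (by rw [uIcc_of_le hs] at hx; exact hx.1))
      ((continuous_const_mul (-K)).intervalIntegrable _ _)
    rw [intervalIntegral.integral_const_mul, integral_id] at hFTC
    linarith
  have hGauss : Integrable fun s : ℝ =>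
      exp (c * (Γ b + K / 2 * b ^ 2)) * (s * exp (-(c * K / 2) * s ^ 2)) :=
    (integrable_mul_exp_neg_mul_sq (by positivity)).const_mul _
  refine hGauss.integrableOn.congr_fun (fun s hs => ?_) measurableSet_Ioi
  dsimp only
  rw [hΓ_eq s (le_of_lt hs), mul_left_comm, ← exp_add]
  ring_nf

/-- With `Γ(u) = ∫₀ᵘ γ` and `c = 1/(2β)`, this is the derivative `f'` of the coupling function. -/
noncomputable def couplingFDeriv (Γ : ℝ → ℝ) (c u : ℝ) : ℝ :=
  exp (-c * Γ u) * ∫ s in Ioi u, s * exp (c * Γ s)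

theorem hasDerivAt_couplingFDeriv (hΓ : ∀ u, HasDerivAt Γ (γ u) u)
    (hφ : IntegrableOn (fun s => s * exp (c * Γ s)) (Ioi b)) (r : ℝ) :
    HasDerivAt (couplingFDeriv Γ c) (-c * γ r * couplingFDeriv Γ c r - r) r := by
  have hΓc : Continuous Γ := continuous_iff_continuousAt.2 fun u => (hΓ u).continuousAt
  have hH := hasDerivAt_setIntegral_Ioi (by fun_prop) hφ r
  refine (((hΓ r).const_mul (-c)).exp.mul hH).congr_deriv ?_
  have hcancel : exp (-c * Γ r) * exp (c * Γ r) = 1 := by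
    rw [← exp_add, neg_mul, neg_add_cancel, exp_zero]
  unfold couplingFDeriv
  linear_combination -r * hcancel

theorem hasDerivAt_integral_couplingFDeriv (hΓ : ∀ u, HasDerivAt Γ (γ u) u)
    (hφ : IntegrableOn (fun s => s * exp (c * Γ s)) (Ioi b)) (r : ℝ) :
    HasDerivAt (fun r => ∫ u in (0:ℝ)..r, couplingFDeriv Γ c u) (couplingFDeriv Γ c r) r :=
  (Continuous.integral_hasStrictDerivAt (continuous_iff_continuousAt.2 fun u =>
    (hasDerivAt_couplingFDeriv hΓ hφ u).continuousAt) 0 r).hasDerivAt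

end CouplingODE

theorem continuous_rateGamma {R : ℝ} (K₁ K₂ : ℝ) (hR : 0 < R) :
    Continuous (rateGamma R K₁ K₂) := by
  refine Continuous.if_le (by fun_prop) (Continuous.if_le (by fun_prop) (by fun_prop)
    continuous_id continuous_const fun x (hx : x = 2 * R) => ?_) continuous_id continuous_const
    fun x (hx : x = R) => ?_
  · subst hx
    field_simp
    ring
  · subst hx
    rw [if_pos (by linarith)]
    ring

theorem rateGamma_of_two_mul_le {R s : ℝ} (K₁ K₂ : ℝ) (hR : 0 < R) (hs : 2 * R ≤ s) :
    rateGamma R K₁ K₂ s = -K₂ * s := by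
  rw [rateGamma, if_neg (by linarith)]
  rcases hs.eq_or_lt with rfl | hlt
  · rw [if_pos le_rfl]
    field_simp
    ring
  · rw [if_neg hlt.not_ge]

theorem couplingF_ode_general (β R K₁ K₂ : ℝ)
    (hβ : 0 < β) (hR : 0 < R) (hK₂ : 0 < K₂) :
    (∀ r ∈ Set.Ioi (0:ℝ),
        DifferentiableAt ℝ (couplingF β R K₁ K₂) r ∧
        DifferentiableAt ℝ (deriv (couplingF β R K₁ K₂)) r) ∧
    deriv (couplingF β R K₁ K₂) 0 = deltaConst β R K₁ K₂ ∧
    (∀ r ≥ (0:ℝ),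
      deriv (deriv (couplingF β R K₁ K₂)) r =
          -(1 / (2 * β)) * rateGamma R K₁ K₂ r * deriv (couplingF β R K₁ K₂) r - r ∧
      deriv (couplingF β R K₁ K₂) r * rateGamma R K₁ K₂ r +
          2 * β * deriv (deriv (couplingF β R K₁ K₂)) r = -(2 * β) * r) := by
  set Γ := fun u => ∫ v in (0:ℝ)..u, rateGamma R K₁ K₂ v
  have hΓ (u : ℝ) : HasDerivAt Γ (rateGamma R K₁ K₂ u) u :=
    ((continuous_rateGamma K₁ K₂ hR).integral_hasStrictDerivAt 0 u).hasDerivAt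
  have hφ : IntegrableOn (fun s => s * exp (1 / (2 * β) * Γ s)) (Ioi (2 * R)) :=
    integrableOn_Ioi_mul_exp_of_hasDerivAt_neg_mul (by positivity) hK₂ fun s hs =>
      rateGamma_of_two_mul_le K₁ K₂ hR hs ▸ hΓ s
  have hF (r : ℝ) : HasDerivAt (couplingF β R K₁ K₂) (couplingFDeriv Γ (1 / (2 * β)) r) r :=
    hasDerivAt_integral_couplingFDeriv hΓ hφ r
  have hF' : deriv (couplingF β R K₁ K₂) = couplingFDeriv Γ (1 / (2 * β)) :=
    funext fun r => (hF r).deriv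
  have hF'' (r : ℝ) := hasDerivAt_couplingFDeriv hΓ hφ r
  rw [← hF'] at hF''
  refine ⟨fun r _ => ⟨(hF r).differentiableAt, (hF'' r).differentiableAt⟩, ?_, fun r _ => ?_⟩
  · simp [hF', couplingFDeriv, Γ, deltaConst]
  · rw [(hF'' r).deriv]
    refine ⟨rfl, ?_⟩
    field_simp
    ring

/-- ODE satisfied by the coupling distance function `f`: `f` is twice
differentiable on `(0,∞)`, `f′(0) = δ`, and for every `r ≥ 0`,
`f″(r) = −(1/(2β)) γ(r) f′(r) − r`, equivalently
`f′(r) γ(r) + 2β f″(r) = −2β r`. -/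
theorem couplingF_ode (β R K₁ K₂ : ℝ)
    (hβ : 0 < β) (hR : 0 < R) (hK₁ : 0 ≤ K₁) (hK₂ : 0 < K₂) :
    (∀ r ∈ Set.Ioi (0:ℝ),
        DifferentiableAt ℝ (couplingF β R K₁ K₂) r ∧
        DifferentiableAt ℝ (deriv (couplingF β R K₁ K₂)) r) ∧
    deriv (couplingF β R K₁ K₂) 0 = deltaConst β R K₁ K₂ ∧
    (∀ r ≥ (0:ℝ),
      deriv (deriv (couplingF β R K₁ K₂)) r =
          -(1 / (2 * β)) * rateGamma R K₁ K₂ r * deriv (couplingF β R K₁ K₂) r - r ∧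
      deriv (couplingF β R K₁ K₂) r * rateGamma R K₁ K₂ r +
          2 * β * deriv (deriv (couplingF β R K₁ K₂)) r = -(2 * β) * r) :=
  couplingF_ode_general β R K₁ K₂ hβ hR hK₂
end

section
/- Two-sided linear bounds for f: With β > 0, the piecewise rate function γ (γ(r) = K₁r for r ≤ R, γ(r) = (−((K₁+K₂)/R)(r−R)+K₁)r for R ≤ r ≤ 2R, γ(r) = −K₂ r for r > 2R, where R > 0, K₁ ≥ 0, K₂ > 0), δ := ∫₀^∞ s e^{(1/(2β))∫₀ˢ γ(v)dv} ds, and f(r) = ∫₀ʳ e^{−(1/(2β))∫₀ᵘ γ(v)dv} ( ∫_u^∞ s e^{(1/(2β))∫₀ˢ γ(v)dv} ds ) du, one has (2β/K₂) r ≤ f(r) ≤ δ r for all r ≥ 0; in particular the constant c_E := K₂δ/(2β) satisfies c_E ≥ 1. -/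
/-!
Write `γ(r) = ρ(r) r` with the nonincreasing slope `ρ`. The substitution `y = v²` turns
`Γ(s) = ∫₀ˢ γ` into `Ψ(s²)`, where `Ψ' = ρ(√·)/2` is nonincreasing, so `Ψ` is concave, and
`Ψ' = -K₂/2` beyond `(2R)²`. The substitution `s = √(t² + u²)` writes the tail
`∫_u^∞ s e^{Γ(s)/(2β)} ds` as `∫₀^∞ t e^{Ψ(t² + u²)/(2β)} dt`, and concavity gives
`Ψ(u²) - K₂t²/2 ≤ Ψ(t² + u²) ≤ Ψ(u²) + Ψ(t²)`. Hence the integrand of `f` lies between the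
Gaussian integral `∫₀^∞ t e^{-K₂t²/(4β)} dt = 2β/K₂` and `δ`, for every `u ≥ 0`.
-/

open MeasureTheory Real

open Set Filter MeasureTheory Real

theorem Antitone.intervalIntegral_le_mul_sub {ψ : ℝ → ℝ} (hψ : Antitone ψ) (a b : ℝ) :
    ∫ x in a..b, ψ x ≤ ψ a * (b - a) := by
  rcases le_total a b with hab | hba
  · calc ∫ x in a..b, ψ x ≤ ∫ _ in a..b, ψ a :=
          intervalIntegral.integral_mono_on hab hψ.intervalIntegrable intervalIntegrable_const
            fun x hx => hψ hx.1
      _ = ψ a * (b - a) := by simp [mul_comm]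
  · calc ∫ x in a..b, ψ x = -∫ x in b..a, ψ x := intervalIntegral.integral_symm b a
      _ ≤ -∫ _ in b..a, ψ a := neg_le_neg <|
          intervalIntegral.integral_mono_on hba intervalIntegrable_const hψ.intervalIntegrable
            fun x hx => hψ hx.2
      _ = ψ a * (b - a) := by simp; ring

theorem Antitone.intervalIntegral_add_le {ψ : ℝ → ℝ} (hψ : Antitone ψ) {a b : ℝ} (ha : 0 ≤ a)
    (hb : 0 ≤ b) : ∫ x in a..a + b, ψ x ≤ ∫ x in 0..b, ψ x := by
  have hshift_eq : ∫ x in 0..b, ψ (x + a) = ∫ x in a..a + b, ψ x := by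
    rw [intervalIntegral.integral_comp_add_right]; simp [add_comm]
  rw [← hshift_eq]
  have hshift : Antitone fun x => ψ (x + a) := fun x y hxy => hψ (by linarith)
  exact intervalIntegral.integral_mono_on hb hshift.intervalIntegrable hψ.intervalIntegrable
    fun x _ => hψ (by linarith)

theorem integral_Ioi_mul_exp_neg_mul_sq {b : ℝ} (hb : 0 < b) :
    ∫ t in Ioi 0, t * exp (-b * t ^ 2) = 1 / (2 * b) := by
  have h := integral_mul_cexp_neg_mul_sq (b := (b : ℂ)) (by simpa using hb)
  rw [one_div, ← Complex.ofReal_inj]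
  push_cast
  rw [← h, ← integral_complex_ofReal]
  push_cast
  rfl

theorem image_sqrt_sq_add_sq_Ioi {u : ℝ} (hu : 0 ≤ u) :
    (fun t => √(t ^ 2 + u ^ 2)) '' Ioi 0 = Ioi u := by
  ext s
  constructor
  · rintro ⟨t, ht, rfl⟩
    rw [mem_Ioi, lt_sqrt hu]
    have : 0 < t ^ 2 := by have := mem_Ioi.mp ht; positivity
    linarith
  · intro hs
    have hus : u ^ 2 < s ^ 2 := by have := mem_Ioi.mp hs; nlinarith
    refine ⟨√(s ^ 2 - u ^ 2), sqrt_pos.mpr (by linarith), ?_⟩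
    dsimp only
    rw [sq_sqrt (by linarith), sub_add_cancel, sqrt_sq (by linarith [mem_Ioi.mp hs])]

theorem integral_Ioi_mul_eq_integral_Ioi_sqrt {u : ℝ} (hu : 0 ≤ u) (g : ℝ → ℝ) :
    ∫ s in Ioi u, s * g s = ∫ t in Ioi 0, t * g √(t ^ 2 + u ^ 2) := by
  have hderiv : ∀ t ∈ Ioi (0 : ℝ),
      HasDerivWithinAt (fun t => √(t ^ 2 + u ^ 2)) (t / √(t ^ 2 + u ^ 2)) (Ioi 0) t := by
    intro t ht
    have h := ((hasDerivAt_pow 2 t).add_const (u ^ 2)).sqrt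
      (by have := mem_Ioi.mp ht; positivity)
    exact (h.congr_deriv (by norm_num; field_simp)).hasDerivWithinAt
  have hinj : InjOn (fun t => √(t ^ 2 + u ^ 2)) (Ioi 0) := by
    intro t₁ h₁ t₂ h₂ h
    have hsq : t₁ ^ 2 = t₂ ^ 2 := by
      have := (sqrt_inj (by positivity) (by positivity)).mp h
      linarith
    exact (sq_eq_sq₀ (le_of_lt h₁) (le_of_lt h₂)).mp hsq
  rw [← image_sqrt_sq_add_sq_Ioi hu,
    integral_image_eq_integral_abs_deriv_smul measurableSet_Ioi hderiv hinj]
  refine setIntegral_congr_fun measurableSet_Ioi fun t ht => ?_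
  have hpos : 0 < √(t ^ 2 + u ^ 2) := sqrt_pos.mpr (by have := mem_Ioi.mp ht; positivity)
  simp only [smul_eq_mul, abs_of_pos (div_pos (mem_Ioi.mp ht) hpos)]
  field_simp

theorem Antitone.le_of_forall_ge_eq {φ : ℝ → ℝ} (hφ : Antitone φ) {Y c : ℝ}
    (hφY : ∀ y ≥ Y, φ y = c) (y : ℝ) : c ≤ φ y := by
  rw [← hφY (max y Y) (le_max_right y Y)]
  exact hφ (le_max_left y Y)

theorem intervalIntegral_mem_Icc_of_forall_mem_Icc {f : ℝ → ℝ} {a b m M : ℝ} (hab : a ≤ b)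
    (hf : IntervalIntegrable f volume a b) (hfab : ∀ x ∈ Icc a b, f x ∈ Icc m M) :
    ∫ x in a..b, f x ∈ Icc (m * (b - a)) (M * (b - a)) := by
  constructor
  · calc m * (b - a) = ∫ _ in a..b, m := by simp [mul_comm]
      _ ≤ ∫ x in a..b, f x :=
        intervalIntegral.integral_mono_on hab intervalIntegrable_const hf fun x hx => (hfab x hx).1
  · calc ∫ x in a..b, f x ≤ ∫ _ in a..b, M :=
          intervalIntegral.integral_mono_on hab hf intervalIntegrable_const
            fun x hx => (hfab x hx).2
      _ = M * (b - a) := by simp [mul_comm]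

def IsSqPrimitive (G φ : ℝ → ℝ) : Prop :=
  ∀ s ≥ 0, G s = ∫ y in (0 : ℝ)..s ^ 2, φ y

namespace IsSqPrimitive

variable {G φ : ℝ → ℝ} {κ Y u t : ℝ}

theorem const_mul (hG : IsSqPrimitive G φ) (c : ℝ) :
    IsSqPrimitive (fun s => c * G s) (fun y => c * φ y) := fun s hs => by
  simp only [hG s hs, intervalIntegral.integral_const_mul]

theorem continuousOn (hG : IsSqPrimitive G φ) (hφ : Antitone φ) : ContinuousOn G (Ici 0) :=
  ((intervalIntegral.continuous_primitive (fun _ _ => hφ.intervalIntegrable) 0).comp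
    (continuous_pow 2)).continuousOn.congr fun s hs => hG s hs

theorem sqrt_sq_add_sq_le (hG : IsSqPrimitive G φ) (hφ : Antitone φ) (hu : 0 ≤ u) (ht : 0 ≤ t) :
    G √(t ^ 2 + u ^ 2) ≤ G u + G t := by
  have hshift := hφ.intervalIntegral_add_le (sq_nonneg u) (sq_nonneg t)
  have hsplit := intervalIntegral.integral_add_adjacent_intervals (a := 0) (b := u ^ 2)
    (c := u ^ 2 + t ^ 2) (μ := volume) hφ.intervalIntegrable hφ.intervalIntegrable
  rw [hG _ (sqrt_nonneg _), hG u hu, hG t ht, sq_sqrt (by positivity), add_comm (t ^ 2)]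
  linarith

theorem sub_mul_sq_le_sqrt_sq_add_sq (hG : IsSqPrimitive G φ) (hφ : Antitone φ)
    (hφY : ∀ y ≥ Y, φ y = -κ) (hu : 0 ≤ u) :
    G u - κ * t ^ 2 ≤ G √(t ^ 2 + u ^ 2) := by
  have htail : -κ * t ^ 2 ≤ ∫ y in u ^ 2..u ^ 2 + t ^ 2, φ y := by
    calc -κ * t ^ 2 = ∫ _ in u ^ 2..u ^ 2 + t ^ 2, -κ := by simp [mul_comm]
      _ ≤ ∫ y in u ^ 2..u ^ 2 + t ^ 2, φ y :=
        intervalIntegral.integral_mono_on (by linarith [sq_nonneg t]) intervalIntegrable_const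
          hφ.intervalIntegrable fun y _ => hφ.le_of_forall_ge_eq hφY y
  have hsplit := intervalIntegral.integral_add_adjacent_intervals (a := 0) (b := u ^ 2)
    (c := u ^ 2 + t ^ 2) (μ := volume) hφ.intervalIntegrable hφ.intervalIntegrable
  rw [hG _ (sqrt_nonneg _), hG u hu, sq_sqrt (by positivity), add_comm (t ^ 2)]
  linarith

theorem le_sub_mul_sq (hG : IsSqPrimitive G φ) (hφ : Antitone φ) (hφY : ∀ y ≥ Y, φ y = -κ)
    {s : ℝ} (hs : 0 ≤ s) : G s ≤ (∫ y in (0 : ℝ)..Y, φ y) + κ * Y - κ * s ^ 2 := by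
  have htail := hφ.intervalIntegral_le_mul_sub Y (s ^ 2)
  rw [hφY Y le_rfl] at htail
  rw [hG s hs, ← intervalIntegral.integral_add_adjacent_intervals (b := Y) hφ.intervalIntegrable
    hφ.intervalIntegrable]
  linarith

theorem integrableOn_mul_exp (hG : IsSqPrimitive G φ) (hφ : Antitone φ)
    (hφY : ∀ y ≥ Y, φ y = -κ) (hκ : 0 < κ) :
    IntegrableOn (fun s => s * exp (G s)) (Ioi 0) := by
  set C := (∫ y in (0 : ℝ)..Y, φ y) + κ * Y
  refine Integrable.mono' ((integrable_mul_exp_neg_mul_sq hκ).const_mul (exp C)).integrableOn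
    ((continuousOn_id.mul ((hG.continuousOn hφ).rexp)).mono Ioi_subset_Ici_self
      |>.aestronglyMeasurable measurableSet_Ioi) ?_
  refine (ae_restrict_iff' measurableSet_Ioi).mpr (Eventually.of_forall fun s hs => ?_)
  have hs : 0 < s := hs
  rw [norm_of_nonneg (by positivity), mul_left_comm, ← exp_add]
  gcongr
  linarith [hG.le_sub_mul_sq hφ hφY hs.le]

theorem mul_exp_sqrt_sq_add_sq_le (hG : IsSqPrimitive G φ) (hφ : Antitone φ) (hu : 0 ≤ u)
    (ht : 0 ≤ t) : t * exp (G √(t ^ 2 + u ^ 2)) ≤ exp (G u) * (t * exp (G t)) := by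
  rw [mul_left_comm, ← exp_add]
  gcongr
  exact hG.sqrt_sq_add_sq_le hφ hu ht

theorem integrableOn_mul_exp_sqrt_sq_add_sq (hG : IsSqPrimitive G φ) (hφ : Antitone φ)
    (hφY : ∀ y ≥ Y, φ y = -κ) (hκ : 0 < κ) (hu : 0 ≤ u) :
    IntegrableOn (fun t => t * exp (G √(t ^ 2 + u ^ 2))) (Ioi 0) := by
  refine Integrable.mono' ((hG.integrableOn_mul_exp hφ hφY hκ).const_mul (exp (G u))) ?_ ?_
  · refine ContinuousOn.aestronglyMeasurable ?_ measurableSet_Ioi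
    exact continuousOn_id.mul ((hG.continuousOn hφ).comp (by fun_prop)
      fun t _ => sqrt_nonneg _).rexp
  refine (ae_restrict_iff' measurableSet_Ioi).mpr (Eventually.of_forall fun t ht => ?_)
  have ht : 0 < t := ht
  rw [norm_of_nonneg (by positivity)]
  exact hG.mul_exp_sqrt_sq_add_sq_le hφ hu ht.le

theorem integral_Ioi_le (hG : IsSqPrimitive G φ) (hφ : Antitone φ) (hφY : ∀ y ≥ Y, φ y = -κ)
    (hκ : 0 < κ) (hu : 0 ≤ u) :
    ∫ s in Ioi u, s * exp (G s) ≤ exp (G u) * ∫ s in Ioi 0, s * exp (G s) := by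
  rw [integral_Ioi_mul_eq_integral_Ioi_sqrt hu (fun s => exp (G s)), ← integral_const_mul]
  exact setIntegral_mono_on (hG.integrableOn_mul_exp_sqrt_sq_add_sq hφ hφY hκ hu)
    ((hG.integrableOn_mul_exp hφ hφY hκ).const_mul _) measurableSet_Ioi
    fun t ht => hG.mul_exp_sqrt_sq_add_sq_le hφ hu (le_of_lt ht)

theorem le_integral_Ioi (hG : IsSqPrimitive G φ) (hφ : Antitone φ) (hφY : ∀ y ≥ Y, φ y = -κ)
    (hκ : 0 < κ) (hu : 0 ≤ u) :
    exp (G u) * (1 / (2 * κ)) ≤ ∫ s in Ioi u, s * exp (G s) := by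
  rw [integral_Ioi_mul_eq_integral_Ioi_sqrt hu (fun s => exp (G s)),
    ← integral_Ioi_mul_exp_neg_mul_sq hκ, ← integral_const_mul]
  refine setIntegral_mono_on ((integrable_mul_exp_neg_mul_sq hκ).const_mul _).integrableOn
    (hG.integrableOn_mul_exp_sqrt_sq_add_sq hφ hφY hκ hu) measurableSet_Ioi fun t ht => ?_
  have ht : 0 < t := ht
  rw [mul_left_comm, ← exp_add]
  gcongr
  linarith [hG.sub_mul_sq_le_sqrt_sq_add_sq hφ hφY hu (t := t)]

theorem exp_neg_mul_integral_Ioi_mem_Icc (hG : IsSqPrimitive G φ) (hφ : Antitone φ)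
    (hφY : ∀ y ≥ Y, φ y = -κ) (hκ : 0 < κ) (hu : 0 ≤ u) :
    exp (-G u) * ∫ s in Ioi u, s * exp (G s) ∈
      Icc (1 / (2 * κ)) (∫ s in Ioi 0, s * exp (G s)) := by
  have hcancel : exp (-G u) * exp (G u) = 1 := by rw [← exp_add, neg_add_cancel, exp_zero]
  constructor
  · calc 1 / (2 * κ) = exp (-G u) * (exp (G u) * (1 / (2 * κ))) := by
          rw [← mul_assoc, hcancel, one_mul]
      _ ≤ _ := by gcongr; exact hG.le_integral_Ioi hφ hφY hκ hu
  · calc _ ≤ exp (-G u) * (exp (G u) * ∫ s in Ioi 0, s * exp (G s)) := by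
          gcongr; exact hG.integral_Ioi_le hφ hφY hκ hu
      _ = _ := by rw [← mul_assoc, hcancel, one_mul]

theorem antitoneOn_integral_Ioi (hG : IsSqPrimitive G φ) (hφ : Antitone φ)
    (hφY : ∀ y ≥ Y, φ y = -κ) (hκ : 0 < κ) :
    AntitoneOn (fun u => ∫ s in Ioi u, s * exp (G s)) (Ici 0) := by
  intro u hu v _ huv
  refine setIntegral_mono_set
    ((hG.integrableOn_mul_exp hφ hφY hκ).mono_set (Ioi_subset_Ioi hu))
    ((ae_restrict_iff' measurableSet_Ioi).mpr (Eventually.of_forall fun s hs => ?_))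
    (Eventually.of_forall (Ioi_subset_Ioi huv))
  have hs : 0 < s := lt_of_le_of_lt hu hs
  positivity

theorem linear_bounds (hG : IsSqPrimitive G φ) (hφ : Antitone φ) (hφY : ∀ y ≥ Y, φ y = -κ)
    (hκ : 0 < κ) {r : ℝ} (hr : 0 ≤ r) :
    1 / (2 * κ) * r ≤ ∫ u in (0 : ℝ)..r, exp (-G u) * ∫ s in Ioi u, s * exp (G s) ∧
      ∫ u in (0 : ℝ)..r, exp (-G u) * ∫ s in Ioi u, s * exp (G s) ≤
        (∫ s in Ioi 0, s * exp (G s)) * r := by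
  have hsub : uIcc 0 r ⊆ Ici 0 := by rw [uIcc_of_le hr]; exact Icc_subset_Ici_self
  have hint : IntervalIntegrable (fun u => exp (-G u) * ∫ s in Ioi u, s * exp (G s)) volume 0 r :=
    ((hG.antitoneOn_integral_Ioi hφ hφY hκ).mono hsub).intervalIntegrable.continuousOn_mul
      ((hG.continuousOn hφ).mono hsub).neg.rexp
  simpa using intervalIntegral_mem_Icc_of_forall_mem_Icc hr hint
    fun u hu => hG.exp_neg_mul_integral_Ioi_mem_Icc hφ hφY hκ hu.1

end IsSqPrimitive

noncomputable def rateSlope (R K₁ K₂ r : ℝ) : ℝ :=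
  if r ≤ R then K₁ else if r ≤ 2 * R then -((K₁ + K₂) / R) * (r - R) + K₁ else -K₂

section rateSlope

variable {R K₁ K₂ : ℝ}

theorem rateGamma_eq_rateSlope_mul (r : ℝ) : rateGamma R K₁ K₂ r = rateSlope R K₁ K₂ r * r := by
  unfold rateGamma rateSlope
  split_ifs <;> rfl

theorem rateSlope_of_two_mul_le (hR : 0 < R) {r : ℝ} (hr : 2 * R ≤ r) :
    rateSlope R K₁ K₂ r = -K₂ := by
  unfold rateSlope
  split_ifs with h₁ h₂
  · linarith
  · have : r = 2 * R := le_antisymm h₂ hr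
    subst this
    field_simp
    ring
  · rfl

theorem continuous_rateSlope (hR : 0 < R) : Continuous (rateSlope R K₁ K₂) := by
  unfold rateSlope
  have haffine : Continuous fun r => -((K₁ + K₂) / R) * (r - R) + K₁ := by fun_prop
  refine continuous_const.if_le (haffine.if_le continuous_const continuous_id
    continuous_const fun r hr => ?_) continuous_id continuous_const fun r hr => ?_
  · rw [hr]
    field_simp
    ring
  · simp [hr, (by linarith : R ≤ 2 * R)]

theorem antitone_rateSlope (hR : 0 < R) (hK : 0 ≤ K₁ + K₂) : Antitone (rateSlope R K₁ K₂) := by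
  intro x y hxy
  have hc : (K₁ + K₂) / R * R = K₁ + K₂ := div_mul_cancel₀ _ hR.ne'
  have hc₀ : 0 ≤ (K₁ + K₂) / R := by positivity
  unfold rateSlope
  split_ifs <;> nlinarith [mul_le_mul_of_nonneg_left hxy hc₀]

theorem isSqPrimitive_integral_rateGamma (hR : 0 < R) :
    IsSqPrimitive (fun s => ∫ v in (0 : ℝ)..s, rateGamma R K₁ K₂ v)
      (fun y => 1 / 2 * rateSlope R K₁ K₂ √y) := by
  intro s hs
  have hcont := continuous_rateSlope (K₁ := K₁) (K₂ := K₂) hR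
  have hsubst := intervalIntegral.integral_comp_mul_deriv (a := 0) (b := s) (f := fun v => v ^ 2)
    (f' := fun v => 2 * v) (g := fun y => 1 / 2 * rateSlope R K₁ K₂ √y)
    (fun v _ => by simpa using hasDerivAt_pow 2 v) (by fun_prop) (by fun_prop)
  simp only [Function.comp_apply, ne_eq, OfNat.ofNat_ne_zero, not_false_eq_true, zero_pow]
    at hsubst
  rw [← hsubst]
  refine intervalIntegral.integral_congr fun v hv => ?_
  rw [uIcc_of_le hs] at hv
  simp only [rateGamma_eq_rateSlope_mul, sqrt_sq hv.1]
  ring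

end rateSlope

/-- Two-sided linear bounds for `f`: `(2β/K₂) r ≤ f(r) ≤ δ r` for all `r ≥ 0`;
in particular the constant `c_E = K₂δ/(2β)` satisfies `c_E ≥ 1`. -/
theorem couplingF_linear_bounds (β R K₁ K₂ : ℝ)
    (hβ : 0 < β) (hR : 0 < R) (hK₁ : 0 ≤ K₁) (hK₂ : 0 < K₂) :
    (∀ r ≥ (0:ℝ),
      (2 * β / K₂) * r ≤ couplingF β R K₁ K₂ r ∧
      couplingF β R K₁ K₂ r ≤ deltaConst β R K₁ K₂ * r) ∧
    1 ≤ K₂ * deltaConst β R K₁ K₂ / (2 * β) := by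
  have hG := (isSqPrimitive_integral_rateGamma (K₁ := K₁) (K₂ := K₂) hR).const_mul (1 / (2 * β))
  have hφ : Antitone fun y => 1 / (2 * β) * (1 / 2 * rateSlope R K₁ K₂ √y) :=
    (((antitone_rateSlope hR (by linarith)).comp_monotone fun _ _ => sqrt_le_sqrt).const_mul
      (by norm_num)).const_mul (by positivity)
  have hφY : ∀ y ≥ (2 * R) ^ 2, 1 / (2 * β) * (1 / 2 * rateSlope R K₁ K₂ √y) = -(K₂ / (4 * β)) :=
    fun y hy => by
      have hy' : 2 * R ≤ √y := (le_sqrt (by positivity) (le_trans (by positivity) hy)).mpr hy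
      rw [rateSlope_of_two_mul_le hR hy']
      field_simp
      ring
  have hκ : 1 / (2 * (K₂ / (4 * β))) = 2 * β / K₂ := by field_simp; ring
  have hbounds := fun r (hr : r ≥ 0) => hG.linear_bounds hφ hφY (by positivity) hr
  simp only [hκ, ← neg_mul] at hbounds
  refine ⟨hbounds, ?_⟩
  rw [le_div_iff₀ (by positivity), one_mul, ← div_le_iff₀' hK₂]
  have hδ := hbounds 1 zero_le_one
  rw [mul_one, mul_one] at hδ
  exact hδ.1.trans hδ.2
end

section
/- Lipschitz estimate for the empirical-vs-mean diffusion error: Let σ̃ : ℝ^d × ℝ^d → ℝ^{d×n} satisfy (1/2)‖σ̃(x₁,y₁) − σ̃(x₂,y₂)‖²_{HS} ≤ K_σ(|x₁−x₂|² + |y₁−y₂|²) for all x₁,x₂,y₁,y₂ ∈ ℝ^d and σ̃(x,y)σ̃(x,y)* ≤ K_σ I_{d×d} for all x, y (as symmetric matrices), where K_σ > 0. Let μ be a probability measure on ℝ^d, let N ≥ 1, and for x = (x¹,…,x^N) ∈ (ℝ^d)^N define Σⁱ(x) := ((1/N) Σ_{m=1}^N σ̃(xⁱ,x^m)) ((1/N)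 Σ_{m=1}^N σ̃(xⁱ,x^m))* − (∫_{ℝ^d} σ̃(xⁱ,y) μ(dy)) (∫_{ℝ^d} σ̃(xⁱ,y) μ(dy))* for 1 ≤ i ≤ N. Then for all x, x̃ ∈ (ℝ^d)^N, Σ_{i=1}^N ‖Σⁱ(x)‖_{HS} − Σ_{i=1}^N ‖Σⁱ(x̃)‖_{HS} ≤ 6√2 K_σ Σ_{i=1}^N |xⁱ − x̃ⁱ|. -/
open MeasureTheory Matrix

/-- Hilbert–Schmidt (Frobenius) norm of a real matrix. -/
noncomputable def hsNorm {m n : ℕ} (A : Matrix (Fin m) (Fin n) ℝ) : ℝ :=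
  Real.sqrt (∑ i, ∑ j, (A i j) ^ 2)

/-!
Write `Aᵢ(x) = (1/N) ∑ₘ σ̃(xⁱ, xᵐ)` and `B(c) = ∫ σ̃(c, y) μ(dy)`. Both are averages of matrices of
operator norm `≤ √K_σ` (this is what `σ̃σ̃* ≤ K_σ` says), so they have operator norm `≤ √K_σ`.
Since `AAᵀ - A'A'ᵀ = (A - A')Aᵀ + A'(A - A')ᵀ` and `‖MPᵀ‖_HS ≤ ‖P‖_op ‖M‖_HS`, the map `A ↦ AAᵀ` is
`2√K_σ`-Lipschitz for the HS norm on that operator-norm ball. The Lipschitz hypothesis makes `σ̃`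
`√(2K_σ)`-Lipschitz in `|x₁ - x₂| + |y₁ - y₂|`, hence
`‖Aᵢ(x) - Aᵢ(x̃)‖_HS ≤ √(2K_σ)(|xⁱ - x̃ⁱ| + (1/N) ∑ₘ |xᵐ - x̃ᵐ|)` and
`‖B(xⁱ) - B(x̃ⁱ)‖_HS ≤ √(2K_σ)|xⁱ - x̃ⁱ|`. Summing over `i` gives
`2√K_σ · √(2K_σ) · 3 ∑ᵢ |xⁱ - x̃ⁱ|`.
-/

open scoped Matrix.Norms.L2Operator

lemma le_sqrt_two_mul_mul_add_of_half_sq_le {t a b K : ℝ} (hK : 0 ≤ K) (ha : 0 ≤ a) (hb : 0 ≤ b)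
    (h : 1 / 2 * t ^ 2 ≤ K * (a ^ 2 + b ^ 2)) : t ≤ √(2 * K) * (a + b) := by
  calc t ≤ √(2 * K * (a + b) ^ 2) :=
        Real.le_sqrt_of_sq_le (by nlinarith [mul_nonneg hK (mul_nonneg ha hb)])
    _ = √(2 * K) * (a + b) := by rw [Real.sqrt_mul (by positivity), Real.sqrt_sq (by positivity)]

section OperatorNorm

variable {ι κ : Type*} [Fintype ι] [Fintype κ] [DecidableEq κ]

lemma norm_toLp_mulVec_le (A : Matrix ι κ ℝ) (w : κ → ℝ) :
    ‖WithLp.toLp 2 (A *ᵥ w)‖ ≤ ‖A‖ * ‖WithLp.toLp 2 w‖ :=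
  A.l2_opNorm_mulVec (WithLp.toLp 2 w)

lemma l2_opNorm_le_of_mulVec {A : Matrix ι κ ℝ} {r : ℝ} (hr : 0 ≤ r)
    (h : ∀ w : κ → ℝ, ‖WithLp.toLp 2 (A *ᵥ w)‖ ≤ r * ‖WithLp.toLp 2 w‖) : ‖A‖ ≤ r := by
  rw [l2_opNorm_def]
  exact ContinuousLinearMap.opNorm_le_bound _ hr fun w => h w.ofLp

lemma abs_apply_le_l2_opNorm (A : Matrix ι κ ℝ) (a : ι) (b : κ) : |A a b| ≤ ‖A‖ := by
  have h := norm_toLp_mulVec_le A (Pi.single b 1)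
  rw [mulVec_single_one, PiLp.toLp_single, PiLp.norm_single, norm_one, mul_one] at h
  exact (PiLp.norm_apply_le _ a).trans h

lemma l2_opNorm_le_sqrt_of_posSemidef [DecidableEq ι] {P : Matrix ι κ ℝ} {K : ℝ} (hK : 0 ≤ K)
    (hP : (K • (1 : Matrix ι ι ℝ) - P * Pᵀ).PosSemidef) : ‖P‖ ≤ √K := by
  rw [← l2_opNorm_conjTranspose, conjTranspose_eq_transpose_of_trivial]
  refine l2_opNorm_le_of_mulVec (Real.sqrt_nonneg K) fun v => ?_
  have hquad := hP.dotProduct_mulVec_nonneg v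
  rw [sub_mulVec, dotProduct_sub, smul_mulVec, one_mulVec, ← mulVec_mulVec, dotProduct_mulVec,
    ← mulVec_transpose, star_trivial, dotProduct_smul, smul_eq_mul, sub_nonneg] at hquad
  refine pow_le_pow_iff_left₀ (norm_nonneg _) (by positivity) two_ne_zero |>.mp ?_
  rw [mul_pow, Real.sq_sqrt hK]
  simpa only [← real_inner_self_eq_norm_sq, EuclideanSpace.inner_toLp_toLp, star_trivial]
    using hquad

end OperatorNorm

section HilbertSchmidt

variable {k m n : ℕ}

noncomputable def hsVec : Matrix (Fin m) (Fin n) ℝ →ₗ[ℝ] EuclideanSpace ℝ (Fin n × Fin m) where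
  toFun A := WithLp.toLp 2 A.vec
  map_add' A B := by rw [vec_add, WithLp.toLp_add]
  map_smul' c A := by rw [vec_smul, WithLp.toLp_smul, RingHom.id_apply]

lemma hsNorm_eq_norm_hsVec (A : Matrix (Fin m) (Fin n) ℝ) : hsNorm A = ‖hsVec A‖ := by
  rw [EuclideanSpace.norm_eq, hsNorm, Fintype.sum_prod_type, Finset.sum_comm]
  simp [hsVec, vec, sq_abs]

lemma hsNorm_nonneg (A : Matrix (Fin m) (Fin n) ℝ) : 0 ≤ hsNorm A := Real.sqrt_nonneg _

lemma hsNorm_sub_hsNorm_le (A B : Matrix (Fin m) (Fin n) ℝ) :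
    hsNorm A - hsNorm B ≤ hsNorm (A - B) := by
  simpa only [hsNorm_eq_norm_hsVec, map_sub] using norm_sub_norm_le (hsVec A) (hsVec B)

lemma hsNorm_add_le (A B : Matrix (Fin m) (Fin n) ℝ) : hsNorm (A + B) ≤ hsNorm A + hsNorm B := by
  simpa only [hsNorm_eq_norm_hsVec, map_add] using norm_add_le (hsVec A) (hsVec B)

lemma hsNorm_sub_le (A B : Matrix (Fin m) (Fin n) ℝ) : hsNorm (A - B) ≤ hsNorm A + hsNorm B := by
  simpa only [hsNorm_eq_norm_hsVec, map_sub] using norm_sub_le (hsVec A) (hsVec B)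

lemma hsNorm_sum_le {τ : Type*} (s : Finset τ) (A : τ → Matrix (Fin m) (Fin n) ℝ) :
    hsNorm (∑ i ∈ s, A i) ≤ ∑ i ∈ s, hsNorm (A i) := by
  simpa only [hsNorm_eq_norm_hsVec, map_sum] using norm_sum_le s fun i => hsVec (A i)

lemma hsNorm_smul (c : ℝ) (A : Matrix (Fin m) (Fin n) ℝ) : hsNorm (c • A) = |c| * hsNorm A := by
  rw [hsNorm_eq_norm_hsVec, hsNorm_eq_norm_hsVec, map_smul, norm_smul, Real.norm_eq_abs]

lemma hsNorm_transpose (A : Matrix (Fin m) (Fin n) ℝ) : hsNorm Aᵀ = hsNorm A := by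
  rw [hsNorm, hsNorm, Finset.sum_comm]
  rfl

lemma hsNorm_sq_eq_sum_norm_row_sq (A : Matrix (Fin m) (Fin n) ℝ) :
    hsNorm A ^ 2 = ∑ i, ‖WithLp.toLp 2 (A i)‖ ^ 2 := by
  rw [hsNorm, Real.sq_sqrt (by positivity)]
  simp [EuclideanSpace.norm_sq_eq]

lemma hsNorm_mul_transpose_le (M : Matrix (Fin k) (Fin n) ℝ) (P : Matrix (Fin m) (Fin n) ℝ) :
    hsNorm (M * Pᵀ) ≤ ‖P‖ * hsNorm M := by
  have hrow : ∀ i, (M * Pᵀ) i = P *ᵥ M i := fun i => by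
    ext j
    simp [mul_apply, mulVec, dotProduct, mul_comm]
  refine pow_le_pow_iff_left₀ (hsNorm_nonneg _) (by positivity [hsNorm_nonneg M]) two_ne_zero
    |>.mp ?_
  rw [mul_pow, hsNorm_sq_eq_sum_norm_row_sq, hsNorm_sq_eq_sum_norm_row_sq, Finset.mul_sum]
  gcongr with i
  rw [hrow, ← mul_pow]
  exact pow_le_pow_left₀ (norm_nonneg _) (norm_toLp_mulVec_le P (M i)) 2

lemma hsNorm_mul_transpose_sub_le (A B : Matrix (Fin m) (Fin n) ℝ) :
    hsNorm (A * Aᵀ - B * Bᵀ) ≤ (‖A‖ + ‖B‖) * hsNorm (A - B) := by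
  have hsplit : A * Aᵀ - B * Bᵀ = (A - B) * Aᵀ + ((A - B) * Bᵀ)ᵀ := by
    rw [transpose_mul, transpose_transpose, transpose_sub, Matrix.sub_mul, Matrix.mul_sub]
    abel
  calc hsNorm (A * Aᵀ - B * Bᵀ) ≤ hsNorm ((A - B) * Aᵀ) + hsNorm ((A - B) * Bᵀ) := by
        rw [hsplit, ← hsNorm_transpose ((A - B) * Bᵀ)]
        exact hsNorm_add_le _ _
    _ ≤ (‖A‖ + ‖B‖) * hsNorm (A - B) := by
        rw [add_mul]
        exact add_le_add (hsNorm_mul_transpose_le _ _) (hsNorm_mul_transpose_le _ _)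

lemma hsNorm_sub_hsNorm_mul_transpose_sub_le {A A' B B' : Matrix (Fin m) (Fin n) ℝ}
    {r : ℝ} (hA : ‖A‖ ≤ r) (hA' : ‖A'‖ ≤ r) (hB : ‖B‖ ≤ r) (hB' : ‖B'‖ ≤ r) :
    hsNorm (A * Aᵀ - B * Bᵀ) - hsNorm (A' * A'ᵀ - B' * B'ᵀ) ≤
      2 * r * (hsNorm (A - A') + hsNorm (B - B')) := by
  have hsplit : A * Aᵀ - B * Bᵀ - (A' * A'ᵀ - B' * B'ᵀ) =
      (A * Aᵀ - A' * A'ᵀ) - (B * Bᵀ - B' * B'ᵀ) := by abel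
  calc hsNorm (A * Aᵀ - B * Bᵀ) - hsNorm (A' * A'ᵀ - B' * B'ᵀ)
      ≤ hsNorm (A * Aᵀ - A' * A'ᵀ) + hsNorm (B * Bᵀ - B' * B'ᵀ) :=
        (hsNorm_sub_hsNorm_le _ _).trans (hsplit ▸ hsNorm_sub_le _ _)
    _ ≤ (r + r) * hsNorm (A - A') + (r + r) * hsNorm (B - B') := by
        refine add_le_add ((hsNorm_mul_transpose_sub_le A A').trans ?_)
          ((hsNorm_mul_transpose_sub_le B B').trans ?_)
        · exact mul_le_mul_of_nonneg_right (add_le_add hA hA') (hsNorm_nonneg _)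
        · exact mul_le_mul_of_nonneg_right (add_le_add hB hB') (hsNorm_nonneg _)
    _ = 2 * r * (hsNorm (A - A') + hsNorm (B - B')) := by ring

end HilbertSchmidt

section MatrixIntegral

variable {ι κ α E : Type*} [Fintype ι] [Fintype κ] [DecidableEq ι] [DecidableEq κ]
  [MeasurableSpace α] {μ : Measure α} [NormedAddCommGroup E] [NormedSpace ℝ E] [CompleteSpace E]
  {F : α → Matrix ι κ ℝ}

lemma LinearMap.map_matrix_of_integral (L : Matrix ι κ ℝ →ₗ[ℝ] E)
    (hF : ∀ a b, Integrable (fun y => F y a b) μ) :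
    L (of fun a b => ∫ y, F y a b ∂μ) = ∫ y, L (F y) ∂μ := by
  have hexpand : ∀ A : Matrix ι κ ℝ, L A = ∑ a, ∑ b, A a b • L (Matrix.single a b 1) := fun A => by
    conv_lhs => rw [matrix_eq_sum_single A]
    simp only [map_sum]
    refine Finset.sum_congr rfl fun a _ => Finset.sum_congr rfl fun b _ => ?_
    rw [← map_smul, smul_single, smul_eq_mul, mul_one]
  rw [hexpand, funext fun y => hexpand (F y)]
  simp only [of_apply]
  rw [integral_finsetSum _ fun a _ => integrable_finsetSum _ fun b _ => (hF a b).smul_const _]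
  refine Finset.sum_congr rfl fun a _ => ?_
  rw [integral_finsetSum _ fun b _ => (hF a b).smul_const _]
  exact Finset.sum_congr rfl fun b _ => (integral_smul_const _ _).symm

lemma LinearMap.norm_map_matrix_of_integral_le [IsProbabilityMeasure μ]
    (L : Matrix ι κ ℝ →ₗ[ℝ] E) (hF : ∀ a b, Integrable (fun y => F y a b) μ) {C : ℝ}
    (hC : ∀ y, ‖L (F y)‖ ≤ C) : ‖L (of fun a b => ∫ y, F y a b ∂μ)‖ ≤ C := by
  simpa [L.map_matrix_of_integral hF] using
    norm_integral_le_of_norm_le_const (μ := μ) (ae_of_all _ hC)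

end MatrixIntegral

section Diffusion

variable {m n : ℕ}

noncomputable def meanDiffusion {X Y : Type*} [MeasurableSpace Y] (μ : Measure Y)
    (σ : X → Y → Matrix (Fin m) (Fin n) ℝ) (c : X) : Matrix (Fin m) (Fin n) ℝ :=
  of fun a b => ∫ y, σ c y a b ∂μ

noncomputable def empiricalDiffusion {X : Type*} (σ : X → X → Matrix (Fin m) (Fin n) ℝ) {N : ℕ}
    (x : Fin N → X) (i : Fin N) : Matrix (Fin m) (Fin n) ℝ :=
  of fun a b => (1 / (N : ℝ)) * ∑ k, σ (x i) (x k) a b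

noncomputable def diffusionError {X : Type*} [MeasurableSpace X] (μ : Measure X)
    (σ : X → X → Matrix (Fin m) (Fin n) ℝ) {N : ℕ} (x : Fin N → X) (i : Fin N) :
    Matrix (Fin m) (Fin m) ℝ :=
  empiricalDiffusion σ x i * (empiricalDiffusion σ x i)ᵀ -
    meanDiffusion μ σ (x i) * (meanDiffusion μ σ (x i))ᵀ

section Mean

variable {X Y : Type*} [MeasurableSpace Y] {μ : Measure Y} [IsProbabilityMeasure μ]
  {σ : X → Y → Matrix (Fin m) (Fin n) ℝ}

lemma l2_opNorm_meanDiffusion_le {c : X} (hc : ∀ a b, Integrable (fun y => σ c y a b) μ)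
    {r : ℝ} (hr : ∀ y, ‖σ c y‖ ≤ r) : ‖meanDiffusion μ σ c‖ ≤ r :=
  LinearMap.id.norm_map_matrix_of_integral_le hc hr

lemma hsNorm_meanDiffusion_sub_le {c c' : X} (hc : ∀ a b, Integrable (fun y => σ c y a b) μ)
    (hc' : ∀ a b, Integrable (fun y => σ c' y a b) μ) {C : ℝ}
    (hC : ∀ y, hsNorm (σ c y - σ c' y) ≤ C) :
    hsNorm (meanDiffusion μ σ c - meanDiffusion μ σ c') ≤ C := by
  have hsub : meanDiffusion μ σ c - meanDiffusion μ σ c' =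
      of fun a b => ∫ y, (σ c y - σ c' y) a b ∂μ := by
    ext a b
    exact (integral_sub (hc a b) (hc' a b)).symm
  rw [hsub, hsNorm_eq_norm_hsVec]
  exact hsVec.norm_map_matrix_of_integral_le (fun a b => (hc a b).sub (hc' a b))
    fun y => hsNorm_eq_norm_hsVec (σ c y - σ c' y) ▸ hC y

end Mean

section Empirical

variable {X : Type*} {σ : X → X → Matrix (Fin m) (Fin n) ℝ} {N : ℕ}

lemma empiricalDiffusion_eq_smul_sum (x : Fin N → X) (i : Fin N) :
    empiricalDiffusion σ x i = (1 / (N : ℝ)) • ∑ k, σ (x i) (x k) := by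
  ext a b
  simp [empiricalDiffusion, Matrix.sum_apply]

lemma l2_opNorm_empiricalDiffusion_le {r : ℝ} (hr : ∀ y z, ‖σ y z‖ ≤ r) (x : Fin N → X)
    (i : Fin N) : ‖empiricalDiffusion σ x i‖ ≤ r := by
  have hN : (0 : ℝ) < N := by exact_mod_cast i.pos
  rw [empiricalDiffusion_eq_smul_sum, norm_smul, Real.norm_of_nonneg (by positivity)]
  calc 1 / (N : ℝ) * ‖∑ k, σ (x i) (x k)‖ ≤ 1 / (N : ℝ) * ∑ _k : Fin N, r := by
        gcongr
        exact (norm_sum_le _ _).trans (Finset.sum_le_sum fun k _ => hr _ _)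
    _ = r := by simp [field]

lemma hsNorm_empiricalDiffusion_sub_le [SeminormedAddCommGroup X] {L : ℝ}
    (hσ : ∀ x₁ x₂ y₁ y₂, hsNorm (σ x₁ y₁ - σ x₂ y₂) ≤ L * (‖x₁ - x₂‖ + ‖y₁ - y₂‖))
    (x x' : Fin N → X) (i : Fin N) :
    hsNorm (empiricalDiffusion σ x i - empiricalDiffusion σ x' i) ≤
      L * (‖x i - x' i‖ + 1 / (N : ℝ) * ∑ k, ‖x k - x' k‖) := by
  have hN : (0 : ℝ) < N := by exact_mod_cast i.pos
  rw [empiricalDiffusion_eq_smul_sum, empiricalDiffusion_eq_smul_sum, ← smul_sub,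
    ← Finset.sum_sub_distrib, hsNorm_smul, abs_of_pos (by positivity)]
  calc 1 / (N : ℝ) * hsNorm (∑ k, (σ (x i) (x k) - σ (x' i) (x' k)))
      ≤ 1 / (N : ℝ) * ∑ k, L * (‖x i - x' i‖ + ‖x k - x' k‖) := by
        gcongr
        exact (hsNorm_sum_le _ _).trans (Finset.sum_le_sum fun k _ => hσ _ _ _ _)
    _ = L * (‖x i - x' i‖ + 1 / (N : ℝ) * ∑ k, ‖x k - x' k‖) := by
        rw [← Finset.mul_sum, Finset.sum_add_distrib, Finset.sum_const, Finset.card_univ,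
          Fintype.card_fin, nsmul_eq_mul]
        field_simp

end Empirical

section Error

variable {X : Type*} [SeminormedAddCommGroup X] [MeasurableSpace X] {μ : Measure X}
  [IsProbabilityMeasure μ] {σ : X → X → Matrix (Fin m) (Fin n) ℝ} {N : ℕ} {r L : ℝ}

variable (hint : ∀ c a b, Integrable (fun y => σ c y a b) μ) (hop : ∀ y z, ‖σ y z‖ ≤ r)
  (hlip : ∀ x₁ x₂ y₁ y₂, hsNorm (σ x₁ y₁ - σ x₂ y₂) ≤ L * (‖x₁ - x₂‖ + ‖y₁ - y₂‖))
include hint hop hlip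

lemma hsNorm_diffusionError_sub_hsNorm_le (x x' : Fin N → X) (i : Fin N) :
    hsNorm (diffusionError μ σ x i) - hsNorm (diffusionError μ σ x' i) ≤
      2 * r * L * (2 * ‖x i - x' i‖ + 1 / (N : ℝ) * ∑ k, ‖x k - x' k‖) := by
  refine (hsNorm_sub_hsNorm_mul_transpose_sub_le (l2_opNorm_empiricalDiffusion_le hop x i)
    (l2_opNorm_empiricalDiffusion_le hop x' i) (l2_opNorm_meanDiffusion_le (hint _) (hop _))
    (l2_opNorm_meanDiffusion_le (hint _) (hop _))).trans ?_
  have hmean : hsNorm (meanDiffusion μ σ (x i) - meanDiffusion μ σ (x' i)) ≤ L * ‖x i - x' i‖ :=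
    hsNorm_meanDiffusion_sub_le (hint _) (hint _) fun y => by simpa using hlip (x i) (x' i) y y
  have hr : 0 ≤ r := (norm_nonneg _).trans (hop (x i) (x i))
  calc 2 * r * (hsNorm (empiricalDiffusion σ x i - empiricalDiffusion σ x' i) +
        hsNorm (meanDiffusion μ σ (x i) - meanDiffusion μ σ (x' i)))
      ≤ 2 * r * (L * (‖x i - x' i‖ + 1 / (N : ℝ) * ∑ k, ‖x k - x' k‖) + L * ‖x i - x' i‖) := by
        gcongr
        exact hsNorm_empiricalDiffusion_sub_le hlip x x' i
    _ = 2 * r * L * (2 * ‖x i - x' i‖ + 1 / (N : ℝ) * ∑ k, ‖x k - x' k‖) := by ring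

lemma sum_hsNorm_diffusionError_sub_le (hN : N ≠ 0) (x x' : Fin N → X) :
    ∑ i, hsNorm (diffusionError μ σ x i) - ∑ i, hsNorm (diffusionError μ σ x' i) ≤
      6 * r * L * ∑ i, ‖x i - x' i‖ := by
  rw [← Finset.sum_sub_distrib]
  refine (Finset.sum_le_sum fun i _ =>
    hsNorm_diffusionError_sub_hsNorm_le hint hop hlip x x' i).trans_eq ?_
  simp only [← Finset.mul_sum, Finset.sum_add_distrib, Finset.sum_const, Finset.card_univ,
    Fintype.card_fin, nsmul_eq_mul]
  field_simp
  ring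

end Error

end Diffusion

/-- Lipschitz estimate for the empirical-vs-mean diffusion error:
with `σ̃` Lipschitz (in the Hilbert–Schmidt norm) with constant `K_σ` and
`σ̃σ̃* ≤ K_σ I`, and
`Σⁱ(x) = ((1/N)∑_m σ̃(xⁱ,x^m))((1/N)∑_m σ̃(xⁱ,x^m))* − (∫σ̃(xⁱ,y)μ(dy))(∫σ̃(xⁱ,y)μ(dy))*`,
one has `∑_i ‖Σⁱ(x)‖_HS − ∑_i ‖Σⁱ(x̃)‖_HS ≤ 6√2 K_σ ∑_i |xⁱ − x̃ⁱ|`. -/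
theorem diffusion_error_lipschitz
    (d n : ℕ) (K_σ : ℝ) (hKσ : 0 < K_σ)
    (σ : EuclideanSpace ℝ (Fin d) → EuclideanSpace ℝ (Fin d) → Matrix (Fin d) (Fin n) ℝ)
    (hσmeas : ∀ i j, Measurable fun p : EuclideanSpace ℝ (Fin d) × EuclideanSpace ℝ (Fin d) =>
      σ p.1 p.2 i j)
    (hσlip : ∀ x₁ x₂ y₁ y₂ : EuclideanSpace ℝ (Fin d),
      (1 / 2) * hsNorm (σ x₁ y₁ - σ x₂ y₂) ^ 2 ≤ K_σ * (‖x₁ - x₂‖ ^ 2 + ‖y₁ - y₂‖ ^ 2))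
    (hσbd : ∀ x y : EuclideanSpace ℝ (Fin d),
      (K_σ • (1 : Matrix (Fin d) (Fin d) ℝ) - σ x y * (σ x y)ᵀ).PosSemidef)
    (μ : Measure (EuclideanSpace ℝ (Fin d))) [IsProbabilityMeasure μ]
    (N : ℕ) (hN : 1 ≤ N)
    (S : Fin N → (Fin N → EuclideanSpace ℝ (Fin d)) → Matrix (Fin d) (Fin d) ℝ)
    (hS : ∀ i x, S i x =
      (Matrix.of fun a b => (1 / (N : ℝ)) * ∑ m, σ (x i) (x m) a b) *
        (Matrix.of fun a b => (1 / (N : ℝ)) * ∑ m, σ (x i) (x m) a b)ᵀ -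
      (Matrix.of fun a b => ∫ y, σ (x i) y a b ∂μ) *
        (Matrix.of fun a b => ∫ y, σ (x i) y a b ∂μ)ᵀ)
    (x x' : Fin N → EuclideanSpace ℝ (Fin d)) :
    ∑ i, hsNorm (S i x) - ∑ i, hsNorm (S i x')
      ≤ 6 * Real.sqrt 2 * K_σ * ∑ i, ‖x i - x' i‖ := by
  have hop : ∀ y z, ‖σ y z‖ ≤ √K_σ := fun y z =>
    l2_opNorm_le_sqrt_of_posSemidef hKσ.le (hσbd y z)
  have hlip : ∀ x₁ x₂ y₁ y₂, hsNorm (σ x₁ y₁ - σ x₂ y₂) ≤ √(2 * K_σ) * (‖x₁ - x₂‖ + ‖y₁ - y₂‖) :=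
    fun x₁ x₂ y₁ y₂ => le_sqrt_two_mul_mul_add_of_half_sq_le hKσ.le (norm_nonneg _)
      (norm_nonneg _) (hσlip x₁ x₂ y₁ y₂)
  have hint : ∀ c a b, Integrable (fun y => σ c y a b) μ := fun c a b =>
    .of_bound ((hσmeas a b).comp measurable_prodMk_left).aestronglyMeasurable √K_σ
      (ae_of_all _ fun y => (abs_apply_le_l2_opNorm _ a b).trans (hop c y))
  have hSdef : ∀ i z, S i z = diffusionError μ σ z i := hS
  simp only [hSdef]
  calc _ ≤ 6 * √K_σ * √(2 * K_σ) * ∑ i, ‖x i - x' i‖ :=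
        sum_hsNorm_diffusionError_sub_le hint hop hlip (Nat.one_le_iff_ne_zero.mp hN) x x'
    _ = 6 * √2 * K_σ * ∑ i, ‖x i - x' i‖ := by
        rw [Real.sqrt_mul zero_le_two]
        linear_combination (6 * √2 * ∑ i, ‖x i - x' i‖) * Real.mul_self_sqrt hKσ.le
end
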